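/- Retrodicting a Z-basis measurement with the improper-mixture belief: let S be a qubit, E_{0/1} the CPTP map from S to a two-dimensional classical system T given by E_{0/1}(ρ) = ⟨0|ρ|0⟩ |0̃⟩⟨0̃| + ⟨1|ρ|1⟩ |1̃⟩⟨1̃| (where {|0̃⟩,|1̃⟩} is the standard basis of T), and let β₂ = |Φ⁺⟩⟨Φ⁺| on S⊗R₂ with |Φ⁺⟩ = (|00⟩+|11⟩)/√2 and R₂ a qubit. Then R_ext^{E_{0/1},β₂}(|0̃⟩⟨0̃|) = 1_S/2 and R_ext^{E_{0/1},β₂}(|1̃⟩⟨1̃|) = 1_S/2. -/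

import Mathlib

open Matrix
open scoped Kronecker ComplexOrder


open Classical in
/-- The positive semidefinite square root of a matrix (zero if not PSD). -/
noncomputable def msqrt {n : Type*} [Fintype n] [DecidableEq n] (A : Matrix n n ℂ) :
    Matrix n n ℂ :=
  if h : A.PosSemidef then
    (h.1.eigenvectorUnitary : Matrix n n ℂ) *
      Matrix.diagonal (fun i => ((Real.sqrt (h.1.eigenvalues i) : ℝ) : ℂ)) *
      (star h.1.eigenvectorUnitary : Matrix n n ℂ)
  else 0

/-- `A^{-1/2}`: the (nonsingular) inverse of the PSD square root. -/
noncomputable def invsqrt {n : Type*} [Fintype n] [DecidableEq n] (A : Matrix n n ℂ) :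
    Matrix n n ℂ :=
  (msqrt A)⁻¹

/-- Partial trace over the second factor `R`. -/
noncomputable def ptraceR {S R : Type*} [Fintype R] (M : Matrix (S × R) (S × R) ℂ) : Matrix S S ℂ :=
  Matrix.of fun s s' => ∑ r, M (s, r) (s', r)

/-- A density matrix: positive semidefinite with unit trace. -/
def IsDensity {n : Type*} [Fintype n] (A : Matrix n n ℂ) : Prop :=
  A.PosSemidef ∧ A.trace = 1

/-- The Choi matrix of a linear map between matrix algebras. -/
def choi {S T : Type*} [Fintype S] [DecidableEq S]
    (E : Matrix S S ℂ →ₗ[ℂ] Matrix T T ℂ) : Matrix (S × T) (S × T) ℂ :=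
  Matrix.of fun p q => E (Matrix.single p.1 q.1 1) p.2 q.2

/-- Completely positive trace-preserving map. -/
def IsCPTP {S T : Type*} [Fintype S] [DecidableEq S] [Fintype T]
    (E : Matrix S S ℂ →ₗ[ℂ] Matrix T T ℂ) : Prop :=
  (∀ X, (E X).trace = X.trace) ∧ (choi E).PosSemidef

/-- The Hilbert-Schmidt adjoint `E†`, satisfying `Tr[E(X)† Y] = Tr[X† E†(Y)]`. -/
noncomputable def adjMap {S T : Type*} [Fintype S] [DecidableEq S] [Fintype T]
    (E : Matrix S S ℂ →ₗ[ℂ] Matrix T T ℂ) (Y : Matrix T T ℂ) : Matrix S S ℂ :=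
  Matrix.of fun i j => ((E (Matrix.single i j 1))ᴴ * Y).trace

/-- The original Petz map `R^{E,βS}(σ) = √βS E†(E(βS)^{-1/2} σ E(βS)^{-1/2}) √βS`. -/
noncomputable def petz {S T : Type*} [Fintype S] [DecidableEq S] [Fintype T] [DecidableEq T]
    (E : Matrix S S ℂ →ₗ[ℂ] Matrix T T ℂ) (βS : Matrix S S ℂ) (σ : Matrix T T ℂ) :
    Matrix S S ℂ :=
  msqrt βS * adjMap E (invsqrt (E βS) * σ * invsqrt (E βS)) * msqrt βS

/-- The prior-extended Petz map `R^{E⊗Tr,β}`. -/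
noncomputable def petzExt {S R T : Type*} [Fintype S] [DecidableEq S]
    [Fintype R] [DecidableEq R] [Fintype T] [DecidableEq T]
    (E : Matrix S S ℂ →ₗ[ℂ] Matrix T T ℂ) (β : Matrix (S × R) (S × R) ℂ)
    (σ : Matrix T T ℂ) : Matrix (S × R) (S × R) ℂ :=
  msqrt β *
    (adjMap E (invsqrt (E (ptraceR β)) * σ * invsqrt (E (ptraceR β))) ⊗ₖ (1 : Matrix R R ℂ)) *
    msqrt β

/-- The retrodiction map `R_ext^{E,β} = Tr_R ∘ R^{E⊗Tr,β}`. -/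
noncomputable def retroExt {S R T : Type*} [Fintype S] [DecidableEq S]
    [Fintype R] [DecidableEq R] [Fintype T] [DecidableEq T]
    (E : Matrix S S ℂ →ₗ[ℂ] Matrix T T ℂ) (β : Matrix (S × R) (S × R) ℂ)
    (σ : Matrix T T ℂ) : Matrix S S ℂ :=
  ptraceR (petzExt E β σ)

/-- Two beliefs are equivalent if they induce the same retrodiction map for all channels. -/
def EquivBeliefs {S R₁ R₂ : Type*} [Fintype S] [DecidableEq S]
    [Fintype R₁] [DecidableEq R₁] [Fintype R₂] [DecidableEq R₂]
    (β : Matrix (S × R₁) (S × R₁) ℂ) (γ : Matrix (S × R₂) (S × R₂) ℂ) : Prop :=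
  ∀ (T : Type) (_ : Fintype T) (_ : DecidableEq T)
    (E : Matrix S S ℂ →ₗ[ℂ] Matrix T T ℂ),
    IsCPTP E → (E (ptraceR β)).PosDef → (E (ptraceR γ)).PosDef →
    ∀ σ : Matrix T T ℂ, retroExt E β σ = retroExt E γ σ

/-- Measurement in the basis `{v₀, v₁}`, recorded in the standard basis of a classical bit. -/
noncomputable def meas2 (v₀ v₁ : Fin 2 → ℂ) :
    Matrix (Fin 2) (Fin 2) ℂ →ₗ[ℂ] Matrix (Fin 2) (Fin 2) ℂ where
  toFun ρ := (∑ i, ∑ j, star (v₀ i) * ρ i j * v₀ j) • Matrix.single 0 0 1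
      + (∑ i, ∑ j, star (v₁ i) * ρ i j * v₁ j) • Matrix.single 1 1 1
  map_add' x y := by
    simp only [Matrix.add_apply, mul_add, add_mul, Finset.sum_add_distrib, add_smul]
    abel
  map_smul' c x := by
    have h : ∀ v : Fin 2 → ℂ,
        (∑ i, ∑ j, star (v i) * ((c • x) i j) * v j)
          = c * ∑ i, ∑ j, star (v i) * x i j * v j := by
      intro v
      rw [Finset.mul_sum]
      refine Finset.sum_congr rfl fun i _ => ?_
      rw [Finset.mul_sum]
      refine Finset.sum_congr rfl fun j _ => ?_
      simp only [Matrix.smul_apply, smul_eq_mul]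
      ring
    simp only [RingHom.id_apply, smul_add, smul_smul]
    rw [h, h]

/-- The qubit state `|0⟩`. -/
noncomputable def q0 : Fin 2 → ℂ := ![1, 0]
/-- The qubit state `|1⟩`. -/
noncomputable def q1 : Fin 2 → ℂ := ![0, 1]
/-- The qubit state `|+⟩ = (|0⟩+|1⟩)/√2`. -/
noncomputable def qP : Fin 2 → ℂ := ![(Real.sqrt 2 : ℂ)⁻¹, (Real.sqrt 2 : ℂ)⁻¹]
/-- The qubit state `|−⟩ = (|0⟩−|1⟩)/√2`. -/
noncomputable def qM : Fin 2 → ℂ := ![(Real.sqrt 2 : ℂ)⁻¹, -(Real.sqrt 2 : ℂ)⁻¹]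
/-- The qubit state `|+i⟩ = (|0⟩+i|1⟩)/√2`. -/
noncomputable def qPi : Fin 2 → ℂ := ![(Real.sqrt 2 : ℂ)⁻¹, Complex.I * (Real.sqrt 2 : ℂ)⁻¹]
/-- The qubit state `|−i⟩ = (|0⟩−i|1⟩)/√2`. -/
noncomputable def qMi : Fin 2 → ℂ := ![(Real.sqrt 2 : ℂ)⁻¹, -(Complex.I * (Real.sqrt 2 : ℂ)⁻¹)]
/-- The rank-one projector `|v⟩⟨v|`. -/
noncomputable def proj (v : Fin 2 → ℂ) : Matrix (Fin 2) (Fin 2) ℂ :=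
  Matrix.vecMulVec v (star v)

/-- The maximally entangled state `|Φ⁺⟩ = (|00⟩+|11⟩)/√2` on two qubits. -/
noncomputable def PhiPlus : Fin 2 × Fin 2 → ℂ :=
  fun p => if p.1 = p.2 then ((Real.sqrt 2 : ℂ))⁻¹ else 0


/-! A pure belief `|ψ⟩⟨ψ|` is its own square root, so the extended Petz map sandwiches
`Y ⊗ 1` between two copies of the projector and collapses to `⟨ψ|Y ⊗ 1|ψ⟩ • |ψ⟩⟨ψ|`; its
partial trace is this scalar times `β_S`. For `Φ⁺` we have `β_S = 1/2`, which the self-adjoint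
dephasing map `E_{0/1}` fixes, so `Y = E_{0/1}†(2σ) = 2 diag σ` and `⟨Φ⁺|Y ⊗ 1|Φ⁺⟩ = Tr σ = 1`. -/

theorem vecMulVec_star_mul_mul_vecMulVec_star {n : Type*} [Fintype n] (v : n → ℂ)
    (M : Matrix n n ℂ) :
    vecMulVec v (star v) * M * vecMulVec v (star v)
      = (star v ⬝ᵥ M *ᵥ v) • vecMulVec v (star v) := by
  rw [Matrix.mul_assoc, mul_vecMulVec, vecMulVec_mul_vecMulVec]
  ext i j
  simp [vecMulVec_apply, mul_left_comm]

theorem ptraceR_smul {S R : Type*} [Fintype R] (c : ℂ) (M : Matrix (S × R) (S × R) ℂ) :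
    ptraceR (c • M) = c • ptraceR M := by
  ext s s'
  simp [ptraceR, Finset.mul_sum]

section SquareRoot

variable {n : Type*} [Fintype n] [DecidableEq n]

open scoped MatrixOrder in
/-- `msqrt` agrees with the continuous-functional-calculus square root, which is unique. -/
theorem msqrt_eq_of_mul_self {A B : Matrix n n ℂ} (hB : B.PosSemidef) (h : B * B = A) :
    msqrt A = B := by
  have hA : A.PosSemidef := by rw [← h, ← pow_two]; exact hB.pow 2
  have hcfc : (hA.1.eigenvectorUnitary : Matrix n n ℂ) *
      diagonal (fun i => ((√(hA.1.eigenvalues i) : ℝ) : ℂ)) *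
      (star hA.1.eigenvectorUnitary : Matrix n n ℂ) = cfc Real.sqrt A := by
    rw [hA.1.cfc_eq, IsHermitian.cfc]
    simp [Unitary.conjStarAlgAut_apply, Function.comp_def]
  have hunique := CFC.sqrt_unique h hB.nonneg
  rw [CFC.sqrt_eq_cfc, cfc_nnreal_eq_real _ A] at hunique
  rw [msqrt, dif_pos hA, hcfc]
  convert hunique using 2
  funext x
  rw [Real.coe_sqrt, Real.coe_toNNReal']
  rcases le_total 0 x with hx | hx
  · rw [max_eq_left hx]
  · rw [max_eq_right hx, Real.sqrt_zero, Real.sqrt_eq_zero'.mpr hx]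

theorem msqrt_vecMulVec_star {v : n → ℂ} (hv : star v ⬝ᵥ v = 1) :
    msqrt (vecMulVec v (star v)) = vecMulVec v (star v) := by
  refine msqrt_eq_of_mul_self (posSemidef_vecMulVec_self_star v) ?_
  simpa [hv] using vecMulVec_star_mul_mul_vecMulVec_star v 1

theorem msqrt_smul_one {c : ℝ} (hc : 0 ≤ c) :
    msqrt ((c : ℂ) • (1 : Matrix n n ℂ)) = ((√c : ℝ) : ℂ) • 1 := by
  refine msqrt_eq_of_mul_self (PosSemidef.one.smul (by exact_mod_cast Real.sqrt_nonneg c)) ?_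
  rw [smul_mul_smul_comm, one_mul, ← Complex.ofReal_mul, Real.mul_self_sqrt hc]

theorem invsqrt_smul_one_mul_mul {c : ℝ} (hc : 0 < c) (σ : Matrix n n ℂ) :
    invsqrt ((c : ℂ) • (1 : Matrix n n ℂ)) * σ * invsqrt ((c : ℂ) • 1) = (c : ℂ)⁻¹ • σ := by
  have hs : ((√c : ℝ) : ℂ) ≠ 0 := by exact_mod_cast (Real.sqrt_pos.mpr hc).ne'
  have hinv : invsqrt ((c : ℂ) • (1 : Matrix n n ℂ)) = ((√c : ℝ) : ℂ)⁻¹ • 1 := by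
    rw [invsqrt, msqrt_smul_one hc.le]
    refine inv_eq_right_inv ?_
    rw [smul_mul_smul_comm, one_mul, mul_inv_cancel₀ hs, one_smul]
  rw [hinv, smul_mul_assoc, one_mul, mul_smul_comm, mul_one, smul_smul, ← mul_inv,
    ← Complex.ofReal_mul, Real.mul_self_sqrt hc.le]

end SquareRoot

theorem retroExt_vecMulVec_star {S R T : Type*} [Fintype S] [DecidableEq S] [Fintype R]
    [DecidableEq R] [Fintype T] [DecidableEq T] (E : Matrix S S ℂ →ₗ[ℂ] Matrix T T ℂ)
    {ψ : S × R → ℂ} (hψ : star ψ ⬝ᵥ ψ = 1) (σ : Matrix T T ℂ) :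
    retroExt E (vecMulVec ψ (star ψ)) σ
      = (star ψ ⬝ᵥ (adjMap E (invsqrt (E (ptraceR (vecMulVec ψ (star ψ)))) * σ *
            invsqrt (E (ptraceR (vecMulVec ψ (star ψ))))) ⊗ₖ 1) *ᵥ ψ) •
          ptraceR (vecMulVec ψ (star ψ)) := by
  rw [retroExt, petzExt, msqrt_vecMulVec_star hψ, vecMulVec_star_mul_mul_vecMulVec_star,
    ptraceR_smul]

theorem ofReal_sqrt_two_inv_mul_self : ((√2 : ℝ) : ℂ)⁻¹ * ((√2 : ℝ) : ℂ)⁻¹ = 2⁻¹ := by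
  rw [← mul_inv, ← Complex.ofReal_mul, Real.mul_self_sqrt zero_le_two]
  norm_num

theorem star_phiPlus_dotProduct_phiPlus : star PhiPlus ⬝ᵥ PhiPlus = 1 := by
  simp [dotProduct, PhiPlus, Fintype.sum_prod_type, ofReal_sqrt_two_inv_mul_self]

theorem ptraceR_phiPlus :
    ptraceR (vecMulVec PhiPlus (star PhiPlus))
      = ((2⁻¹ : ℝ) : ℂ) • (1 : Matrix (Fin 2) (Fin 2) ℂ) := by
  ext s s'
  fin_cases s <;> fin_cases s' <;>
    simp [ptraceR, vecMulVec_apply, PhiPlus, ofReal_sqrt_two_inv_mul_self]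

theorem star_phiPlus_dotProduct_kronecker_one_mulVec (X : Matrix (Fin 2) (Fin 2) ℂ) :
    star PhiPlus ⬝ᵥ (X ⊗ₖ (1 : Matrix (Fin 2) (Fin 2) ℂ)) *ᵥ PhiPlus = X.trace / 2 := by
  simp only [dotProduct, Pi.star_apply, PhiPlus, RCLike.star_def, mulVec, kroneckerMap_apply,
    one_apply, mul_ite, mul_one, mul_zero, ite_mul, zero_mul, Fintype.sum_prod_type,
    Finset.sum_ite_eq, Finset.mem_univ, ↓reduceIte, Fin.sum_univ_two, map_inv₀,
    Complex.conj_ofReal, zero_ne_one, map_zero, add_zero, one_ne_zero, zero_add, trace, diag_apply]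
  linear_combination (X 0 0 + X 1 1) * ofReal_sqrt_two_inv_mul_self

theorem meas2_q0_q1_apply (ρ : Matrix (Fin 2) (Fin 2) ℂ) :
    meas2 q0 q1 ρ = diagonal fun i => ρ i i := by
  ext i j
  fin_cases i <;> fin_cases j <;> simp [meas2, q0, q1, Fin.sum_univ_two]

theorem adjMap_meas2_q0_q1 (Y : Matrix (Fin 2) (Fin 2) ℂ) :
    adjMap (meas2 q0 q1) Y = diagonal fun i => Y i i := by
  ext i j
  simp only [adjMap, of_apply, meas2_q0_q1_apply]
  fin_cases i <;> fin_cases j <;> simp [trace, Fin.sum_univ_two, mul_apply, single]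

theorem retroExt_measZ_phiPlus (σ : Matrix (Fin 2) (Fin 2) ℂ) :
    retroExt (meas2 q0 q1) (vecMulVec PhiPlus (star PhiPlus)) σ
      = (σ.trace / 2) • (1 : Matrix (Fin 2) (Fin 2) ℂ) := by
  have hprior : meas2 q0 q1 (((2⁻¹ : ℝ) : ℂ) • 1) = ((2⁻¹ : ℝ) : ℂ) • 1 := by
    ext i j
    simp [meas2_q0_q1_apply, one_apply]
  rw [retroExt_vecMulVec_star _ star_phiPlus_dotProduct_phiPlus, ptraceR_phiPlus, hprior,
    invsqrt_smul_one_mul_mul (by norm_num), adjMap_meas2_q0_q1,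
    star_phiPlus_dotProduct_kronecker_one_mulVec, smul_smul]
  congr 1
  simp only [trace, Complex.ofReal_inv, Complex.ofReal_ofNat, inv_inv, Matrix.smul_apply,
    smul_eq_mul, diag_apply, diagonal_apply_eq, Fin.sum_univ_two]
  ring

/-- Retrodicting a Z-basis measurement with the improper-mixture
belief `β₂ = |Φ⁺⟩⟨Φ⁺|` returns the maximally mixed state for both outcomes. -/
theorem retro_measZ_improper_mixture :
    retroExt (meas2 q0 q1) (Matrix.vecMulVec PhiPlus (star PhiPlus))
        (Matrix.single (0 : Fin 2) 0 (1 : ℂ))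
      = (1 / 2 : ℂ) • (1 : Matrix (Fin 2) (Fin 2) ℂ) ∧
    retroExt (meas2 q0 q1) (Matrix.vecMulVec PhiPlus (star PhiPlus))
        (Matrix.single (1 : Fin 2) 1 (1 : ℂ))
      = (1 / 2 : ℂ) • (1 : Matrix (Fin 2) (Fin 2) ℂ) := by
  constructor <;> rw [retroExt_measZ_phiPlus, trace_single_eq_same]
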